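/- Let (Ω,𝒜,P) and (Θ,𝒯,Π) be probability spaces, let L : Θ × Ω → [0,∞) be jointly measurable with ∫_Ω L(θ,ω) dP(ω) ≤ 1 for every θ ∈ Θ, and let v > 0, C > 0. Suppose U ∈ 𝒯 satisfies Π(U) > 0, that for Π(·|U)-almost every θ the function L(θ,·) is P-almost surely positive, that (θ,ω) ↦ log L(θ,ω) is square-integrable with respect to Π(·|U) ⊗ P, and that for Π(·|U)-almost every θ: ∫_Ω log L(θ,ω) dP(ω) ≥ −v and Var_P(log L(θ,·)) ≤ v. Then for every A ∈ 𝒯 and every t > 0: P( { ω : ∫_A L(θ,ω) dΠ(θ) ≥ t · ∫_Θ L(θ,ω) dΠ(θ) } ) ≤ 1/(C²·v) + exp((1+C)v)·Π(A) / (t·Π(U)). -/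

import Mathlib

/-!
Write `G ω` for the `Π(·|U)`-average of `log L(·, ω)`. Averaging over `θ` does not increase
variance, so `E G ≥ -v` and `Var G ≤ v`, and Chebyshev bounds `P (G < -(1 + C) v)` by
`1 / (C² v)`. Jensen (the geometric mean of `L(·, ω)` under `Π(·|U)` is at most its arithmetic
mean) gives `∫ L(θ, ω) dΠ(θ) ≥ Π(U) exp (G ω)`, so off that event the denominator of the
posterior is at least `Π(U) exp (-(1 + C) v)`. Since every `L(θ, ·)` has `P`-integral at most `1`,
the numerator `∫_A L(θ, ω) dΠ(θ)` has `P`-expectation at most `Π(A)`, and Markov's inequality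
finishes the proof.
-/

open MeasureTheory ProbabilityTheory
open scoped ENNReal

section

variable {α β : Type*} [MeasurableSpace α] [MeasurableSpace β]

theorem sq_integral_le_integral_sq {μ : Measure α} [IsProbabilityMeasure μ] {f : α → ℝ}
    (hf : Integrable (fun x => f x ^ 2) μ) : (∫ x, f x ∂μ) ^ 2 ≤ ∫ x, f x ^ 2 ∂μ := by
  by_cases hm : AEStronglyMeasurable f μ
  · have hf2 : MemLp f 2 μ := (memLp_two_iff_integrable_sq hm).2 hf
    have := variance_nonneg f μ
    rw [variance_eq_sub hf2] at this
    simpa only [Pi.pow_apply, sub_nonneg] using this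
  · rw [integral_undef fun hi => hm hi.aestronglyMeasurable, sq, zero_mul]
    exact integral_nonneg fun x => sq_nonneg (f x)

theorem memLp_two_integral_prod_left {μ : Measure α} {ν : Measure β} [SFinite μ]
    [IsProbabilityMeasure ν] {F : α × β → ℝ} (hF : MemLp F 2 (μ.prod ν)) :
    MemLp (fun x => ∫ y, F (x, y) ∂ν) 2 μ := by
  have hm := hF.aestronglyMeasurable.integral_prod_right'
  have hF2 := hF.integrable_sq
  refine (memLp_two_iff_integrable_sq hm).2 (hF2.integral_prod_left.mono' (hm.pow 2) ?_)
  filter_upwards [hF2.prod_right_ae] with x hx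
  rw [Real.norm_eq_abs, abs_of_nonneg (sq_nonneg _)]
  exact sq_integral_le_integral_sq hx

theorem memLp_two_integral_prod_right {μ : Measure α} {ν : Measure β} [IsProbabilityMeasure μ]
    [SFinite ν] {F : α × β → ℝ} (hF : MemLp F 2 (μ.prod ν)) :
    MemLp (fun y => ∫ x, F (x, y) ∂μ) 2 ν :=
  memLp_two_integral_prod_left (hF.comp_measurePreserving Measure.measurePreserving_swap)

theorem variance_integral_prod_le {μ : Measure α} {ν : Measure β} [IsProbabilityMeasure μ]
    [IsProbabilityMeasure ν] {F : α × β → ℝ} (hF : MemLp F 2 (μ.prod ν)) :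
    Var[fun y => ∫ x, F (x, y) ∂μ; ν] ≤ ∫ x, Var[fun y => F (x, y); ν] ∂μ := by
  set m : α → ℝ := fun x => ∫ y, F (x, y) ∂ν
  set K : α × β → ℝ := fun p => F p - m p.1
  have hFi := hF.integrable one_le_two
  have hK2 : Integrable (fun p => K p ^ 2) (μ.prod ν) :=
    (hF.sub ((memLp_two_integral_prod_left hF).comp_fst ν)).integrable_sq
  have hmean : ∫ y, ∫ x, F (x, y) ∂μ ∂ν = ∫ x, m x ∂μ :=
    (integral_integral_swap (f := fun x y => F (x, y)) hFi).symm
  have hcenter : ∀ᵐ y ∂ν, ∫ x, F (x, y) ∂μ - ∫ x, m x ∂μ = ∫ x, K (x, y) ∂μ := by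
    filter_upwards [hFi.prod_left_ae] with y hy
    exact (integral_sub hy hFi.integral_prod_left).symm
  have hslice : ∀ᵐ x ∂μ, ∫ y, K (x, y) ^ 2 ∂ν = Var[fun y => F (x, y); ν] := by
    filter_upwards [hFi.prod_right_ae] with x hx
    exact (variance_eq_integral hx.aemeasurable).symm
  calc Var[fun y => ∫ x, F (x, y) ∂μ; ν]
      = ∫ y, (∫ x, F (x, y) ∂μ - ∫ x, m x ∂μ) ^ 2 ∂ν := by
        rw [variance_eq_integral hFi.integral_prod_right.aemeasurable, hmean]
    _ ≤ ∫ y, ∫ x, K (x, y) ^ 2 ∂μ ∂ν := by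
        refine integral_mono_of_nonneg (.of_forall fun y => sq_nonneg _)
          hK2.integral_prod_right ?_
        filter_upwards [hcenter, hK2.prod_left_ae] with y hy hy2
        rw [hy]
        exact sq_integral_le_integral_sq hy2
    _ = ∫ x, ∫ y, K (x, y) ^ 2 ∂ν ∂μ := (integral_integral_swap hK2).symm
    _ = ∫ x, Var[fun y => F (x, y); ν] ∂μ := integral_congr_ae hslice

theorem meas_lt_le_variance_div_sq {μ : Measure α} [IsFiniteMeasure μ] {X : α → ℝ}
    (hX : MemLp X 2 μ) {a c : ℝ} (hc : 0 < c) (hac : a + c ≤ μ[X]) :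
    μ {x | X x < a} ≤ ENNReal.ofReal (Var[X; μ] / c ^ 2) := by
  refine (measure_mono fun x (hx : X x < a) => ?_).trans (meas_ge_le_variance_div_sq hX hc)
  show c ≤ |X x - μ[X]|
  rw [abs_sub_comm]
  exact le_abs.2 (.inl (by linarith))

theorem meas_integral_prod_lt_le {μ : Measure α} {ν : Measure β} [IsProbabilityMeasure μ]
    [IsProbabilityMeasure ν] {F : α × β → ℝ} (hF : MemLp F 2 (μ.prod ν)) {v C : ℝ} (hv : 0 < v)
    (hC : 0 < C) (hmean : ∀ᵐ x ∂μ, -v ≤ ∫ y, F (x, y) ∂ν)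
    (hvar : ∀ᵐ x ∂μ, Var[fun y => F (x, y); ν] ≤ v) :
    ν {y | ∫ x, F (x, y) ∂μ < -(1 + C) * v} ≤ ENNReal.ofReal (1 / (C ^ 2 * v)) := by
  have hFi := hF.integrable one_le_two
  have hmean' : -v ≤ ∫ y, ∫ x, F (x, y) ∂μ ∂ν := by
    rw [← integral_integral_swap (f := fun x y => F (x, y)) hFi]
    simpa using integral_mono_ae (integrable_const (-v)) hFi.integral_prod_left hmean
  have hvar' : Var[fun y => ∫ x, F (x, y) ∂μ; ν] ≤ v := (variance_integral_prod_le hF).trans <| by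
    simpa using integral_mono_of_nonneg (.of_forall fun x => variance_nonneg _ ν)
      (integrable_const v) hvar
  refine (meas_lt_le_variance_div_sq (memLp_two_integral_prod_right hF) (c := C * v)
    (by positivity) (by linarith)).trans (ENNReal.ofReal_le_ofReal ?_)
  calc Var[fun y => ∫ x, F (x, y) ∂μ; ν] / (C * v) ^ 2 ≤ v / (C * v) ^ 2 := by gcongr
    _ = 1 / (C ^ 2 * v) := by field_simp

theorem ofReal_exp_integral_log_le_lintegral {μ : Measure α} [IsProbabilityMeasure μ]
    {g : α → ℝ} (hg : ∀ᵐ x ∂μ, 0 < g x) (hlog : Integrable (fun x => Real.log (g x)) μ) :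
    ENNReal.ofReal (Real.exp (∫ x, Real.log (g x) ∂μ)) ≤ ∫⁻ x, ENNReal.ofReal (g x) ∂μ := by
  by_cases htop : ∫⁻ x, ENNReal.ofReal (g x) ∂μ = ∞
  · exact htop ▸ le_top
  have hexp : (fun x => Real.exp (Real.log (g x))) =ᵐ[μ] g := hg.mono fun x hx => Real.exp_log hx
  have hg0 : 0 ≤ᵐ[μ] g := hg.mono fun x hx => hx.le
  have hgi : Integrable g μ :=
    ⟨(Real.continuous_exp.comp_aestronglyMeasurable hlog.1).congr hexp,
      (hasFiniteIntegral_iff_ofReal hg0).2 (lt_top_iff_ne_top.2 htop)⟩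
  rw [← ofReal_integral_eq_lintegral_ofReal hgi hg0]
  refine ENNReal.ofReal_le_ofReal ?_
  calc Real.exp (∫ x, Real.log (g x) ∂μ)
      ≤ ∫ x, Real.exp (Real.log (g x)) ∂μ :=
        convexOn_exp.map_integral_le Real.continuous_exp.continuousOn isClosed_univ
          (.of_forall fun _ => Set.mem_univ _) hlog (hgi.congr hexp.symm)
    _ = ∫ x, g x ∂μ := integral_congr_ae hexp

theorem measure_mul_lintegral_cond {μ : Measure α} {s : Set α} (hs0 : μ s ≠ 0) (hs : μ s ≠ ∞)
    (f : α → ℝ≥0∞) : μ s * ∫⁻ x, f x ∂μ[|s] = ∫⁻ x in s, f x ∂μ := by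
  rw [ProbabilityTheory.cond, lintegral_smul_measure, smul_eq_mul, ← mul_assoc,
    ENNReal.mul_inv_cancel hs0 hs, one_mul]

theorem meas_ge_setLIntegral_le_div {μ : Measure α} {ν : Measure β} [SFinite μ] [SFinite ν]
    {ℓ : α × β → ℝ≥0∞} (hℓ : Measurable ℓ) (hℓ1 : ∀ x, ∫⁻ y, ℓ (x, y) ∂ν ≤ 1) (s : Set α)
    {c : ℝ≥0∞} (hc0 : c ≠ 0) (hc : c ≠ ∞) :
    ν {y | c ≤ ∫⁻ x in s, ℓ (x, y) ∂μ} ≤ μ s / c := by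
  have hℓ' : Measurable fun p : β × α => ℓ (p.2, p.1) := hℓ.comp measurable_swap
  refine (meas_ge_le_lintegral_div hℓ'.lintegral_prod_right'.aemeasurable hc0 hc).trans ?_
  gcongr
  calc ∫⁻ y, ∫⁻ x in s, ℓ (x, y) ∂μ ∂ν
      = ∫⁻ x in s, ∫⁻ y, ℓ (x, y) ∂ν ∂μ := lintegral_lintegral_swap hℓ'.aemeasurable
    _ ≤ ∫⁻ _ in s, 1 ∂μ := lintegral_mono hℓ1
    _ = μ s := by simp

theorem ofReal_exp_integral_log_cond_mul_le_lintegral {μ : Measure α} [IsFiniteMeasure μ]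
    {s : Set α} (hs : μ s ≠ 0) {g : α → ℝ} (hg : ∀ᵐ x ∂μ[|s], 0 < g x)
    (hlog : Integrable (fun x => Real.log (g x)) μ[|s]) :
    ENNReal.ofReal (Real.exp (∫ x, Real.log (g x) ∂μ[|s])) * μ s
      ≤ ∫⁻ x, ENNReal.ofReal (g x) ∂μ := by
  have := cond_isProbabilityMeasure (μ := μ) hs
  calc ENNReal.ofReal (Real.exp (∫ x, Real.log (g x) ∂μ[|s])) * μ s
      ≤ μ s * ∫⁻ x, ENNReal.ofReal (g x) ∂μ[|s] := by
        rw [mul_comm]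
        gcongr
        exact ofReal_exp_integral_log_le_lintegral hg hlog
    _ = ∫⁻ x in s, ENNReal.ofReal (g x) ∂μ := measure_mul_lintegral_cond hs (measure_ne_top _ _) _
    _ ≤ ∫⁻ x, ENNReal.ofReal (g x) ∂μ := setLIntegral_le_lintegral _ _

theorem meas_ofReal_mul_lintegral_le_setLIntegral_le {μ : Measure α} {ν : Measure β} [SFinite μ]
    [SFinite ν] {ℓ : α × β → ℝ≥0∞} (hℓ : Measurable ℓ) (hℓ1 : ∀ x, ∫⁻ y, ℓ (x, y) ∂ν ≤ 1)
    (s : Set α) (B : Set β) {k : ℝ≥0∞} (hk0 : k ≠ 0) (hk : k ≠ ∞)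
    (hB : ∀ᵐ y ∂ν, y ∉ B → k ≤ ∫⁻ x, ℓ (x, y) ∂μ) {t : ℝ} (ht : 0 < t) :
    ν {y | ENNReal.ofReal t * ∫⁻ x, ℓ (x, y) ∂μ ≤ ∫⁻ x in s, ℓ (x, y) ∂μ}
      ≤ ν B + μ s / (ENNReal.ofReal t * k) := by
  have hcover : ∀ᵐ y ∂ν, ENNReal.ofReal t * ∫⁻ x, ℓ (x, y) ∂μ ≤ ∫⁻ x in s, ℓ (x, y) ∂μ →
      y ∈ B ∪ {y | ENNReal.ofReal t * k ≤ ∫⁻ x in s, ℓ (x, y) ∂μ} := by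
    filter_upwards [hB] with y hy hE
    by_cases hyB : y ∈ B
    · exact .inl hyB
    · exact .inr (le_trans (by gcongr; exact hy hyB) hE)
  refine (measure_mono_ae hcover).trans ((measure_union_le _ _).trans ?_)
  gcongr
  exact meas_ge_setLIntegral_le_div hℓ hℓ1 s (by positivity) (by finiteness)

end

theorem stmt_6_general {Ω Θ : Type*} [MeasurableSpace Ω] [MeasurableSpace Θ]
    (P : Measure Ω) [IsProbabilityMeasure P]
    (Pri : Measure Θ) [IsProbabilityMeasure Pri]
    (L : Θ × Ω → ℝ) (hLmeas : Measurable L)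
    (hLint : ∀ θ : Θ, ∫⁻ ω, ENNReal.ofReal (L (θ, ω)) ∂P ≤ 1)
    (v C : ℝ) (hv : 0 < v) (hC : 0 < C)
    (U : Set Θ) (hUpos : 0 < Pri U)
    (hLpos : ∀ᵐ θ ∂(ProbabilityTheory.cond Pri U), ∀ᵐ ω ∂P, 0 < L (θ, ω))
    (hlog2 : MemLp (fun p => Real.log (L p)) 2 ((ProbabilityTheory.cond Pri U).prod P))
    (hmean : ∀ᵐ θ ∂(ProbabilityTheory.cond Pri U), -v ≤ ∫ ω, Real.log (L (θ, ω)) ∂P)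
    (hvar : ∀ᵐ θ ∂(ProbabilityTheory.cond Pri U),
      variance (fun ω => Real.log (L (θ, ω))) P ≤ v) :
    ∀ A : Set Θ, MeasurableSet A → ∀ t : ℝ, 0 < t →
      P {ω | ENNReal.ofReal t * ∫⁻ θ, ENNReal.ofReal (L (θ, ω)) ∂Pri
            ≤ ∫⁻ θ in A, ENNReal.ofReal (L (θ, ω)) ∂Pri}
        ≤ ENNReal.ofReal (1 / (C ^ 2 * v)
            + Real.exp ((1 + C) * v) * (Pri A).toReal / (t * (Pri U).toReal)) := by
  intro A _ t ht
  set Q := Pri[|U]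
  have : IsProbabilityMeasure Q := cond_isProbabilityMeasure hUpos.ne'
  set G : Ω → ℝ := fun ω => ∫ θ, Real.log (L (θ, ω)) ∂Q
  set a : ℝ := -(1 + C) * v
  have htail : P {ω | G ω < a} ≤ ENNReal.ofReal (1 / (C ^ 2 * v)) :=
    meas_integral_prod_lt_le hlog2 hv hC hmean hvar
  have hdenom : ∀ᵐ ω ∂P,
      ENNReal.ofReal (Real.exp (G ω)) * Pri U ≤ ∫⁻ θ, ENNReal.ofReal (L (θ, ω)) ∂Pri := by
    have hpos : ∀ᵐ ω ∂P, ∀ᵐ θ ∂Q, 0 < L (θ, ω) :=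
      (Measure.ae_ae_comm (p := fun θ ω => 0 < L (θ, ω))
        (measurableSet_lt measurable_const hLmeas)).1 hLpos
    filter_upwards [hpos, (hlog2.integrable one_le_two).prod_left_ae] with ω hω hωi
    exact ofReal_exp_integral_log_cond_mul_le_lintegral hUpos.ne' hω hωi
  have hpost := meas_ofReal_mul_lintegral_le_setLIntegral_le (μ := Pri)
    (ℓ := fun p => ENNReal.ofReal (L p)) (ENNReal.measurable_ofReal.comp hLmeas) hLint A
    {ω | G ω < a} (k := ENNReal.ofReal (Real.exp a) * Pri U) (by positivity) (by finiteness)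
    (hdenom.mono fun ω hω hGa => le_trans (by gcongr; exact not_lt.1 hGa) hω) ht
  have hdiv : Pri A / (ENNReal.ofReal t * (ENNReal.ofReal (Real.exp a) * Pri U))
      = ENNReal.ofReal (Real.exp ((1 + C) * v) * (Pri A).toReal / (t * (Pri U).toReal)) := by
    have hU0 : 0 < (Pri U).toReal := ENNReal.toReal_pos hUpos.ne' (measure_ne_top _ _)
    conv_lhs => rw [← ENNReal.ofReal_toReal (measure_ne_top Pri U), ← ENNReal.ofReal_mul
      (by positivity), ← ENNReal.ofReal_mul ht.le, ← ENNReal.ofReal_toReal (measure_ne_top Pri A),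
      ← ENNReal.ofReal_div_of_pos (by positivity)]
    congr 1
    simp only [a, neg_mul, Real.exp_neg]
    field_simp
  refine hpost.trans ?_
  rw [hdiv, ENNReal.ofReal_add (by positivity) (by positivity)]
  gcongr

theorem stmt_6 {Ω Θ : Type*} [MeasurableSpace Ω] [MeasurableSpace Θ]
    (P : Measure Ω) [IsProbabilityMeasure P]
    (Pri : Measure Θ) [IsProbabilityMeasure Pri]
    (L : Θ × Ω → ℝ) (hLmeas : Measurable L) (hL0 : ∀ p, 0 ≤ L p)
    (hLint : ∀ θ : Θ, ∫⁻ ω, ENNReal.ofReal (L (θ, ω)) ∂P ≤ 1)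
    (v C : ℝ) (hv : 0 < v) (hC : 0 < C)
    (U : Set Θ) (hU : MeasurableSet U) (hUpos : 0 < Pri U)
    (hLpos : ∀ᵐ θ ∂(ProbabilityTheory.cond Pri U), ∀ᵐ ω ∂P, 0 < L (θ, ω))
    (hlog2 : MemLp (fun p => Real.log (L p)) 2 ((ProbabilityTheory.cond Pri U).prod P))
    (hmean : ∀ᵐ θ ∂(ProbabilityTheory.cond Pri U), -v ≤ ∫ ω, Real.log (L (θ, ω)) ∂P)
    (hvar : ∀ᵐ θ ∂(ProbabilityTheory.cond Pri U),
      variance (fun ω => Real.log (L (θ, ω))) P ≤ v) :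
    ∀ A : Set Θ, MeasurableSet A → ∀ t : ℝ, 0 < t →
      P {ω | ENNReal.ofReal t * ∫⁻ θ, ENNReal.ofReal (L (θ, ω)) ∂Pri
            ≤ ∫⁻ θ in A, ENNReal.ofReal (L (θ, ω)) ∂Pri}
        ≤ ENNReal.ofReal (1 / (C ^ 2 * v)
            + Real.exp ((1 + C) * v) * (Pri A).toReal / (t * (Pri U).toReal)) :=
  stmt_6_general P Pri L hLmeas hLint v C hv hC U hUpos hLpos hlog2 hmean hvar
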